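/- Let p, q ≥ 1, let A be an n×n real matrix whose entries have absolute value at most 1 with at least one entry of absolute value exactly 1, let ε > 0, and let J_ε be the n×n matrix all of whose entries equal ε. Then ‖A + J_ε‖_{q→p} ≤ ‖A‖_{q→p} · (1 + ε·n^{1 + 1/p − 1/q}). -/
import Mathlib


/-- The `ℓ_p` norm of a vector in `ℝ^n` for a real exponent `p`. -/
noncomputable def pnorm {n : ℕ} (p : ℝ) (x : Fin n → ℝ) : ℝ :=
  (∑ i, |x i| ^ p) ^ (1 / p)

/-- The `q ↦ p` operator norm of a matrix `A`. -/
noncomputable def opNorm {n : ℕ} (q p : ℝ) (A : Matrix (Fin n) (Fin n) ℝ) : ℝ :=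
  sSup {r : ℝ | ∃ x : Fin n → ℝ, x ≠ 0 ∧ r = pnorm p (A.mulVec x) / pnorm q x}

lemma pnorm_nonneg {n : ℕ} (p : ℝ) (x : Fin n → ℝ) : 0 ≤ pnorm p x :=
  Real.rpow_nonneg (Finset.sum_nonneg fun i _ => Real.rpow_nonneg (abs_nonneg _) _) _

lemma pnorm_pos {n : ℕ} {q : ℝ} (hq : 0 < q) {x : Fin n → ℝ} (hx : x ≠ 0) :
    0 < pnorm q x := by
  obtain ⟨i, hi⟩ := Function.ne_iff.mp hx
  have h1 : (0:ℝ) < |x i| ^ q := Real.rpow_pos_of_pos (abs_pos.mpr hi) _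
  have h2 : |x i| ^ q ≤ ∑ j, |x j| ^ q :=
    Finset.single_le_sum (fun j _ => Real.rpow_nonneg (abs_nonneg _) _) (Finset.mem_univ i)
  exact Real.rpow_pos_of_pos (lt_of_lt_of_le h1 h2) _

/-- Hölder-type bound: `∑ |x i| ≤ n^(1-1/q) * ‖x‖_q`. -/
lemma sum_abs_le_pnorm {n : ℕ} {q : ℝ} (hq : 1 ≤ q) (x : Fin n → ℝ) :
    ∑ i, |x i| ≤ (n : ℝ) ^ (1 - 1/q) * pnorm q x := by
  have hq0 : 0 < q := lt_of_lt_of_le one_pos hq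
  have hS : 0 ≤ ∑ i, |x i| := Finset.sum_nonneg fun i _ => abs_nonneg _
  have hT : 0 ≤ ∑ i, |x i| ^ q :=
    Finset.sum_nonneg fun i _ => Real.rpow_nonneg (abs_nonneg _) _
  have h := Real.rpow_sum_le_const_mul_sum_rpow Finset.univ x hq
  simp only [Finset.card_univ, Fintype.card_fin] at h
  have h2 : ((∑ i, |x i|) ^ q) ^ (1/q) ≤ ((n:ℝ) ^ (q-1) * ∑ i, |x i| ^ q) ^ (1/q) :=
    Real.rpow_le_rpow (Real.rpow_nonneg hS _) h (by positivity)
  have hL : ((∑ i, |x i|) ^ q) ^ (1/q) = ∑ i, |x i| := by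
    rw [← Real.rpow_mul hS, mul_one_div_cancel hq0.ne', Real.rpow_one]
  have hR : ((n:ℝ) ^ (q-1) * ∑ i, |x i| ^ q) ^ (1/q)
      = (n:ℝ) ^ (1 - 1/q) * pnorm q x := by
    rw [Real.mul_rpow (Real.rpow_nonneg (Nat.cast_nonneg n) _) hT,
      ← Real.rpow_mul (Nat.cast_nonneg n)]
    congr 2
    field_simp
  rw [hL, hR] at h2
  exact h2

/-- Bound on `‖Bx‖_p` for a matrix with entries bounded by `M`. -/
lemma pnorm_mulVec_le {n : ℕ} {p M : ℝ} (hp : 1 ≤ p) (hM : 0 ≤ M)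
    (B : Matrix (Fin n) (Fin n) ℝ) (hB : ∀ i j, |B i j| ≤ M) (x : Fin n → ℝ) :
    pnorm p (B.mulVec x) ≤ (n:ℝ) ^ (1/p) * (M * ∑ j, |x j|) := by
  have hp0 : 0 < p := lt_of_lt_of_le one_pos hp
  set c := M * ∑ j, |x j| with hc
  have hc0 : 0 ≤ c := mul_nonneg hM (Finset.sum_nonneg fun j _ => abs_nonneg _)
  have hi : ∀ i, |B.mulVec x i| ≤ c := by
    intro i
    calc |B.mulVec x i| = |∑ j, B i j * x j| := by
          simp [Matrix.mulVec, dotProduct]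
      _ ≤ ∑ j, |B i j * x j| := Finset.abs_sum_le_sum_abs _ _
      _ ≤ ∑ j, M * |x j| := Finset.sum_le_sum fun j _ => by
          rw [abs_mul]; exact mul_le_mul_of_nonneg_right (hB i j) (abs_nonneg _)
      _ = c := by rw [hc, Finset.mul_sum]
  have h1 : ∑ i, |B.mulVec x i| ^ p ≤ ∑ _i : Fin n, c ^ p :=
    Finset.sum_le_sum fun i _ => Real.rpow_le_rpow (abs_nonneg _) (hi i) hp0.le
  have h2 : (∑ _i : Fin n, c ^ p) = (n:ℝ) * c ^ p := by
    rw [Finset.sum_const, Finset.card_univ, Fintype.card_fin, nsmul_eq_mul]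
  calc pnorm p (B.mulVec x) ≤ ((n:ℝ) * c ^ p) ^ (1/p) := by
        rw [← h2]
        exact Real.rpow_le_rpow
          (Finset.sum_nonneg fun i _ => Real.rpow_nonneg (abs_nonneg _) _) h1 (by positivity)
    _ = (n:ℝ) ^ (1/p) * c := by
        rw [Real.mul_rpow (Nat.cast_nonneg n) (Real.rpow_nonneg hc0 _),
          ← Real.rpow_mul hc0, mul_one_div_cancel hp0.ne', Real.rpow_one]

lemma opNorm_bddAbove {n : ℕ} {p q M : ℝ} (hp : 1 ≤ p) (hq : 1 ≤ q) (hM : 0 ≤ M)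
    (B : Matrix (Fin n) (Fin n) ℝ) (hB : ∀ i j, |B i j| ≤ M) :
    BddAbove {r : ℝ | ∃ x : Fin n → ℝ, x ≠ 0 ∧ r = pnorm p (B.mulVec x) / pnorm q x} := by
  have hq0 : 0 < q := lt_of_lt_of_le one_pos hq
  refine ⟨(n:ℝ) ^ (1/p) * (M * ((n:ℝ) ^ (1 - 1/q))), ?_⟩
  rintro r ⟨x, hx, rfl⟩
  have hxq : 0 < pnorm q x := pnorm_pos hq0 hx
  rw [div_le_iff₀ hxq]
  calc pnorm p (B.mulVec x) ≤ (n:ℝ) ^ (1/p) * (M * ∑ j, |x j|) :=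
        pnorm_mulVec_le hp hM B hB x
    _ ≤ (n:ℝ) ^ (1/p) * (M * ((n:ℝ) ^ (1 - 1/q) * pnorm q x)) := by
        apply mul_le_mul_of_nonneg_left (mul_le_mul_of_nonneg_left (sum_abs_le_pnorm hq x) hM)
        positivity
    _ = (n:ℝ) ^ (1/p) * (M * ((n:ℝ) ^ (1 - 1/q))) * pnorm q x := by ring

/-- if all entries of `A` have absolute value at most `1` and some entry
has absolute value exactly `1`, then adding `ε` to every entry increases the
`q ↦ p` norm by a factor of at most `1 + ε·n^{1 + 1/p − 1/q}`. -/
theorem stmt19 (n : ℕ) (p q : ℝ) (hp : 1 ≤ p) (hq : 1 ≤ q)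
    (A : Matrix (Fin n) (Fin n) ℝ)
    (hA : ∀ i j, |A i j| ≤ 1) (hA1 : ∃ i j, |A i j| = 1)
    (ε : ℝ) (hε : 0 < ε) :
    opNorm q p (A + Matrix.of fun _ _ => ε) ≤
      opNorm q p A * (1 + ε * (n : ℝ) ^ (1 + 1 / p - 1 / q)) := by
  obtain ⟨i0, j0, hij⟩ := hA1
  have hn : 0 < n := i0.pos
  have hn' : (0:ℝ) < (n:ℝ) := by exact_mod_cast hn
  have hp0 : 0 < p := lt_of_lt_of_le one_pos hp
  have hq0 : 0 < q := lt_of_lt_of_le one_pos hq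
  set K := ε * (n : ℝ) ^ (1 + 1/p - 1/q) with hK
  have hK0 : 0 ≤ K := by positivity
  have bddA := opNorm_bddAbove (M := 1) hp hq zero_le_one A hA
  -- 1 ≤ opNorm q p A
  have hone : 1 ≤ opNorm q p A := by
    set e : Fin n → ℝ := Pi.single j0 1 with he
    have hene : e ≠ 0 := by
      intro h
      have := congrFun h j0
      simp [he] at this
    have heq : pnorm q e = 1 := by
      have h1 : ∀ i, |e i| ^ q = if i = j0 then 1 else 0 := by
        intro i
        rcases eq_or_ne i j0 with h | h <;>
          simp [he, Pi.single_apply, h, Real.zero_rpow hq0.ne']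
      simp [pnorm, h1]
    have hcol : ∀ i, A.mulVec e i = A i j0 := by
      intro i
      simp [he, Matrix.mulVec, dotProduct, Pi.single_apply]
    have hcolp : 1 ≤ pnorm p (A.mulVec e) := by
      have h1 : |A.mulVec e i0| ^ p ≤ ∑ i, |A.mulVec e i| ^ p :=
        Finset.single_le_sum (fun i _ => Real.rpow_nonneg (abs_nonneg _) _)
          (Finset.mem_univ i0)
      have h2 : |A.mulVec e i0| ^ p = 1 := by rw [hcol, hij, Real.one_rpow]
      calc (1:ℝ) = 1 ^ (1/p) := (Real.one_rpow _).symm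
        _ ≤ (∑ i, |A.mulVec e i| ^ p) ^ (1/p) := by
            apply Real.rpow_le_rpow zero_le_one _ (by positivity)
            rw [← h2]; exact h1
        _ = pnorm p (A.mulVec e) := rfl
    calc (1:ℝ) ≤ pnorm p (A.mulVec e) / pnorm q e := by
          rw [heq, div_one]; exact hcolp
      _ ≤ opNorm q p A := le_csSup bddA ⟨e, hene, rfl⟩
  -- main triangle-type bound
  have main : opNorm q p (A + Matrix.of fun _ _ => ε) ≤ opNorm q p A + K := by
    apply Real.sSup_le
    · rintro r ⟨x, hx, rfl⟩
      have hxq : 0 < pnorm q x := pnorm_pos hq0 hx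
      rw [div_le_iff₀ hxq]
      have htri : pnorm p ((A + Matrix.of fun _ _ => ε).mulVec x)
          ≤ pnorm p (A.mulVec x) + pnorm p ((Matrix.of fun _ _ => ε : Matrix (Fin n) (Fin n) ℝ).mulVec x) := by
        rw [Matrix.add_mulVec]
        have := Real.Lp_add_le Finset.univ (A.mulVec x)
          ((Matrix.of fun _ _ => ε : Matrix (Fin n) (Fin n) ℝ).mulVec x) hp
        simpa [pnorm] using this
      have hAx : pnorm p (A.mulVec x) ≤ opNorm q p A * pnorm q x := by
        rw [← div_le_iff₀ hxq]
        exact le_csSup bddA ⟨x, hx, rfl⟩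
      have hJx : pnorm p ((Matrix.of fun _ _ => ε : Matrix (Fin n) (Fin n) ℝ).mulVec x)
          ≤ K * pnorm q x := by
        calc pnorm p ((Matrix.of fun _ _ => ε : Matrix (Fin n) (Fin n) ℝ).mulVec x)
            ≤ (n:ℝ) ^ (1/p) * (ε * ∑ j, |x j|) :=
              pnorm_mulVec_le hp hε.le _ (fun i j => by simp [abs_of_pos hε]) x
          _ ≤ (n:ℝ) ^ (1/p) * (ε * ((n:ℝ) ^ (1 - 1/q) * pnorm q x)) := by
              apply mul_le_mul_of_nonneg_left
                (mul_le_mul_of_nonneg_left (sum_abs_le_pnorm hq x) hε.le)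
              positivity
          _ = K * pnorm q x := by
              rw [hK]
              rw [show (1:ℝ) + 1/p - 1/q = 1/p + (1 - 1/q) by ring,
                Real.rpow_add hn']
              ring
      linarith
    · linarith
  nlinarith [main, hone, hK0]
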